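/- Let G be a finite simple graph on vertex set V, let z be a fresh variable not in V, and consider decision lists over V ⊕ {z} with actions in {0, 1, 2}. Define requirements: for each v ∈ V, the assignment that is true exactly on the closed neighborhood of v together with z must yield output 1; the all-false assignment must yield output 0; and the assignment that is true only on z must yield output 2. Then G has a dominating set of size at most k if and only if there exists a decision list with at most k + 1 conditions satisfying all of these requirements. -/

import Mathlib

structure DecisionList (V : Type) (A : Type) where
  entries : List ((V × Bool) × A)
  dflt : A

def DecisionList.eval {V A : Type} (L : DecisionList V A) (s : V → Bool) : A :=
  match L.entries.find? (fun e => s e.1.1 == e.1.2) with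
  | some e => e.2
  | none => L.dflt

/-!
A decision list only depends on the variables it tests. The all-false and the `z`-only
assignments differ only at `z` but must give different outputs, so `z` is tested; the
assignment of `v` and the `z`-only one differ exactly on the closed neighbourhood of `v`,
so some vertex of it is tested. Hence the tested vertices dominate `G` and number at most
`k`. Conversely, a dominating set `D` gives the list "`z` false ↦ 0, `d ∈ D` true ↦ 1,
default 2".
-/

namespace DecisionList

variable {W A : Type}

theorem eval_cons (e : (W × Bool) × A) (l : List ((W × Bool) × A)) (d : A) (s : W → Bool) :
    eval ⟨e :: l, d⟩ s = if s e.1.1 = e.1.2 then e.2 else eval ⟨l, d⟩ s := by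
  by_cases h : s e.1.1 = e.1.2 <;> simp [eval, h]

theorem eval_eq_dflt (L : DecisionList W A) {s : W → Bool}
    (h : ∀ e ∈ L.entries, s e.1.1 ≠ e.1.2) : L.eval s = L.dflt := by
  rw [eval, List.find?_eq_none.mpr (by simpa using h)]

theorem eval_eq_of_forall_action (L : DecisionList W A) {s : W → Bool} {a : A}
    (ha : ∀ e ∈ L.entries, e.2 = a) (hs : ∃ e ∈ L.entries, s e.1.1 = e.1.2) : L.eval s = a := by
  unfold eval
  split
  · next e he => exact ha e (List.mem_of_find?_eq_some he)
  · next hnone =>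
    obtain ⟨e, he, hse⟩ := hs
    exact absurd (by simpa using hse) (List.find?_eq_none.mp hnone e he)

def vars [DecidableEq W] (L : DecisionList W A) : Finset W :=
  (L.entries.map (·.1.1)).toFinset

variable [DecidableEq W]

theorem eval_eq_of_eqOn_vars (L : DecisionList W A) {s t : W → Bool}
    (h : Set.EqOn s t L.vars) : L.eval s = L.eval t := by
  obtain ⟨l, d⟩ := L
  induction l with
  | nil => rfl
  | cons e l ih =>
    have he : s e.1.1 = t e.1.1 := h (by simp [vars])
    rw [eval_cons, eval_cons, he, ih fun w hw => h (by simp_all [vars])]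

theorem exists_mem_vars_ne_of_eval_ne (L : DecisionList W A) {s t : W → Bool}
    (h : L.eval s ≠ L.eval t) : ∃ w ∈ L.vars, s w ≠ t w := by
  by_contra! hst
  exact h (L.eval_eq_of_eqOn_vars hst)

variable {U : Type} [DecidableEq U]

theorem exists_mem_toLeft_vars_ne (L : DecisionList (W ⊕ U) A) {s t : W ⊕ U → Bool}
    (h : L.eval s ≠ L.eval t) (hright : ∀ b, s (.inr b) = t (.inr b)) :
    ∃ a ∈ L.vars.toLeft, s (.inl a) ≠ t (.inl a) := by
  obtain ⟨a | b, hw, hne⟩ := L.exists_mem_vars_ne_of_eval_ne h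
  · exact ⟨a, Finset.mem_toLeft.mpr hw, hne⟩
  · exact absurd (hright b) hne

theorem exists_mem_toRight_vars_ne (L : DecisionList (W ⊕ U) A) {s t : W ⊕ U → Bool}
    (h : L.eval s ≠ L.eval t) (hleft : ∀ a, s (.inl a) = t (.inl a)) :
    ∃ b ∈ L.vars.toRight, s (.inr b) ≠ t (.inr b) := by
  obtain ⟨a | b, hw, hne⟩ := L.exists_mem_vars_ne_of_eval_ne h
  · exact absurd (hleft a) hne
  · exact ⟨b, Finset.mem_toRight.mpr hw, hne⟩

theorem card_toLeft_vars_lt (L : DecisionList (W ⊕ U) A) (h : L.vars.toRight.Nonempty) :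
    L.vars.toLeft.card < L.entries.length := by
  have hvars : L.vars.card ≤ L.entries.length :=
    (List.toFinset_card_le _).trans_eq (List.length_map _)
  have := L.vars.card_toLeft_add_card_toRight
  have := h.card_pos
  omega

end DecisionList

open DecisionList

noncomputable def decisionListOfFinset {W : Type} (D : Finset W) : DecisionList (W ⊕ Unit) ℕ :=
  ⟨((.inr (), false), 0) :: D.toList.map fun d => ((.inl d, true), 1), 2⟩

section decisionListOfFinset

variable {W : Type} (D : Finset W) {s : W ⊕ Unit → Bool}

theorem length_decisionListOfFinset :
    (decisionListOfFinset D).entries.length = D.card + 1 := by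
  simp [decisionListOfFinset]

theorem action_le_two_of_mem_decisionListOfFinset :
    ∀ e ∈ (decisionListOfFinset D).entries, e.2 ≤ 2 := by
  simp [decisionListOfFinset]

theorem eval_decisionListOfFinset_of_fresh_false (hz : s (.inr ()) = false) :
    (decisionListOfFinset D).eval s = 0 := by
  simp [decisionListOfFinset, eval_cons, hz]

theorem eval_decisionListOfFinset_of_exists (hz : s (.inr ()) = true)
    (hD : ∃ d ∈ D, s (.inl d) = true) : (decisionListOfFinset D).eval s = 1 := by
  obtain ⟨d, hd, hsd⟩ := hD
  rw [decisionListOfFinset, eval_cons, if_neg (by simp [hz])]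
  exact eval_eq_of_forall_action _ (by simp) ⟨((.inl d, true), 1), by simpa using hd, hsd⟩

theorem eval_decisionListOfFinset_of_forall (hz : s (.inr ()) = true)
    (hD : ∀ d ∈ D, s (.inl d) = false) : (decisionListOfFinset D).eval s = 2 := by
  rw [decisionListOfFinset, eval_cons, if_neg (by simp [hz])]
  exact eval_eq_dflt _ (by simpa using hD)

end decisionListOfFinset

theorem stmt12 {V : Type} [DecidableEq V] (G : SimpleGraph V)
    [DecidableRel G.Adj] (k : ℕ) :
    (∃ D : Finset V, D.card ≤ k ∧ ∀ v : V, ∃ d ∈ D, d = v ∨ G.Adj v d) ↔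
    (∃ L : DecisionList (V ⊕ Unit) ℕ,
      L.entries.length ≤ k + 1 ∧
      (∀ e ∈ L.entries, e.2 ≤ 2) ∧ L.dflt ≤ 2 ∧
      (∀ v : V, L.eval (fun w => match w with
        | Sum.inl u => decide (u = v ∨ G.Adj v u)
        | Sum.inr _ => true) = 1) ∧
      L.eval (fun _ => false) = 0 ∧
      L.eval (fun w => match w with
        | Sum.inl _ => false
        | Sum.inr _ => true) = 2) := by
  constructor
  · rintro ⟨D, hcard, hD⟩
    refine ⟨decisionListOfFinset D, by rw [length_decisionListOfFinset]; omega,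
      action_le_two_of_mem_decisionListOfFinset D, le_rfl, fun v => ?_,
      eval_decisionListOfFinset_of_fresh_false D rfl,
      eval_decisionListOfFinset_of_forall D rfl fun _ _ => rfl⟩
    obtain ⟨d, hd, hdv⟩ := hD v
    exact eval_decisionListOfFinset_of_exists D rfl ⟨d, hd, decide_eq_true hdv⟩
  · rintro ⟨L, hlen, -, -, hnbhd, hfalse, hfresh⟩
    have hz : L.vars.toRight.Nonempty := by
      obtain ⟨b, hb, -⟩ := L.exists_mem_toRight_vars_ne
        ((hfalse.trans_ne (by decide : 0 ≠ 2)).trans_eq hfresh.symm) fun _ => rfl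
      exact ⟨b, hb⟩
    refine ⟨L.vars.toLeft, by have := L.card_toLeft_vars_lt hz; omega, fun v => ?_⟩
    obtain ⟨d, hd, hne⟩ := L.exists_mem_toLeft_vars_ne
      (((hnbhd v).trans_ne (by decide : 1 ≠ 2)).trans_eq hfresh.symm) fun _ => rfl
    simp only [ne_eq, decide_eq_false_iff_not, not_not] at hne
    exact ⟨d, hd, hne⟩
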